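/- (Eckart–Young for higher-order ⋆M-product: optimality of truncation.) Let M₃,…,M_p be invertible with each M_k = c_k W_k, c_k ≠ 0 and W_k orthogonal, let A ∈ ℝ^{n₁×n₂×⋯×n_p} have t-SVDM A = U ⋆M S ⋆M Vᵀ, and let A_k be the t-rank-k truncation. Then for every tensor B ∈ ℝ^{n₁×n₂×⋯×n_p} of t-rank at most k (equivalently, every frontal slice of the transform-domain tensor B̂ has matrix rank at most k), ‖A − A_k‖_F ≤ ‖A − B‖_F. -/

import Mathlib

open Matrix

/-!
Order-`p` real tensors (`p = q + 2`) are represented as families of frontal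
slices: a tensor `A ∈ ℝ^{n₁ × n₂ × n₃ × ⋯ × n_p}` is a function
`A : TI m → Matrix (Fin n₁) (Fin n₂) ℝ`, where `TI m = ∀ k : Fin q, Fin (m k)`
is the trailing multi-index `(i₃, …, i_p)` and `A i` is the frontal slice
`A(:,:,i₃,…,i_p)`.
-/

namespace TSVDM

variable {q : ℕ} {m : Fin q → ℕ}

/-- Trailing multi-index `(i₃, …, i_p)`. -/
abbrev TI (m : Fin q → ℕ) : Type := ∀ k, Fin (m k)

/-- Transform-domain tensor `Â = A ×₃ M₃ ×₄ M₄ ⋯ ×_p M_p`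
(mode-`k` products along all trailing modes). -/
noncomputable def hat (M : ∀ k, Matrix (Fin (m k)) (Fin (m k)) ℝ) {a b : Type}
    (A : TI m → Matrix a b ℝ) : TI m → Matrix a b ℝ :=
  fun i => ∑ j : TI m, (∏ k, M k (i k) (j k)) • A j

/-- Inverse transform `×₃ M₃⁻¹ ×₄ M₄⁻¹ ⋯ ×_p M_p⁻¹`. -/
noncomputable def unhat (M : ∀ k, Matrix (Fin (m k)) (Fin (m k)) ℝ) {a b : Type}
    (A : TI m → Matrix a b ℝ) : TI m → Matrix a b ℝ :=
  fun i => ∑ j : TI m, (∏ k, (M k)⁻¹ (i k) (j k)) • A j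

/-- The `⋆M`-product: `A ⋆M B = (Â △ B̂) ×₃ M₃⁻¹ ⋯ ×_p M_p⁻¹`, where `△` is the
facewise product (slice-wise matrix multiplication). -/
noncomputable def starM (M : ∀ k, Matrix (Fin (m k)) (Fin (m k)) ℝ)
    {a b c : Type} [Fintype b]
    (A : TI m → Matrix a b ℝ) (B : TI m → Matrix b c ℝ) : TI m → Matrix a c ℝ :=
  unhat M (fun i => hat M A i * hat M B i)

/-- The `⋆M`-transpose: transpose every transform-domain frontal slice. -/
noncomputable def transM (M : ∀ k, Matrix (Fin (m k)) (Fin (m k)) ℝ) {a b : Type}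
    (A : TI m → Matrix a b ℝ) : TI m → Matrix b a ℝ :=
  unhat M (fun i => (hat M A i)ᵀ)

/-- The `⋆M`-identity: all transform-domain frontal slices equal the identity matrix. -/
noncomputable def idM (M : ∀ k, Matrix (Fin (m k)) (Fin (m k)) ℝ)
    (a : Type) [DecidableEq a] : TI m → Matrix a a ℝ :=
  unhat M (fun _ => (1 : Matrix a a ℝ))

/-- `Q` is `⋆M`-orthogonal if `Qᵀ ⋆M Q = Q ⋆M Qᵀ = I`. -/
def IsStarMOrthogonal (M : ∀ k, Matrix (Fin (m k)) (Fin (m k)) ℝ)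
    {a : Type} [Fintype a] [DecidableEq a] (Q : TI m → Matrix a a ℝ) : Prop :=
  starM M (transM M Q) Q = idM M a ∧ starM M Q (transM M Q) = idM M a

/-- Frobenius norm of a tensor. -/
noncomputable def frob {a b : Type} [Fintype a] [Fintype b]
    (A : TI m → Matrix a b ℝ) : ℝ :=
  Real.sqrt (∑ i : TI m, ∑ r : a, ∑ c : b, A i r c ^ 2)

/-- Diagonal position `(j, j)`: row index. -/
def dIdx₁ {n₁ n₂ : ℕ} (j : Fin (min n₁ n₂)) : Fin n₁ :=
  ⟨j.1, lt_of_lt_of_le j.2 (Nat.min_le_left n₁ n₂)⟩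

/-- Diagonal position `(j, j)`: column index. -/
def dIdx₂ {n₁ n₂ : ℕ} (j : Fin (min n₁ n₂)) : Fin n₂ :=
  ⟨j.1, lt_of_lt_of_le j.2 (Nat.min_le_right n₁ n₂)⟩

/-- `A = U ⋆M S ⋆M Vᵀ` is a t-SVDM of `A`: `U`, `V` are `⋆M`-orthogonal, `S` is
f-diagonal (each transform-domain frontal slice is diagonal), and the diagonal
entries of each frontal slice of `Ŝ` are nonnegative and in descending order. -/
structure IsTSVDM (M : ∀ k, Matrix (Fin (m k)) (Fin (m k)) ℝ) {n₁ n₂ : ℕ}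
    (A : TI m → Matrix (Fin n₁) (Fin n₂) ℝ)
    (U : TI m → Matrix (Fin n₁) (Fin n₁) ℝ)
    (S : TI m → Matrix (Fin n₁) (Fin n₂) ℝ)
    (V : TI m → Matrix (Fin n₂) (Fin n₂) ℝ) : Prop where
  decomp : A = starM M (starM M U S) (transM M V)
  orthU : IsStarMOrthogonal M U
  orthV : IsStarMOrthogonal M V
  fdiag : ∀ (i : TI m) (a : Fin n₁) (b : Fin n₂), (a : ℕ) ≠ (b : ℕ) → hat M S i a b = 0
  nonneg : ∀ (i : TI m) (j : Fin (min n₁ n₂)), 0 ≤ hat M S i (dIdx₁ j) (dIdx₂ j)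
  descend : ∀ (i : TI m) (j j' : Fin (min n₁ n₂)), j ≤ j' →
    hat M S i (dIdx₁ j') (dIdx₂ j') ≤ hat M S i (dIdx₁ j) (dIdx₂ j)

/-- The `(j,j)`-singular tube of `S`, as a function of the trailing multi-index. -/
def tube {n₁ n₂ : ℕ} (S : TI m → Matrix (Fin n₁) (Fin n₂) ℝ)
    (j : Fin (min n₁ n₂)) : TI m → ℝ :=
  fun i => S i (dIdx₁ j) (dIdx₂ j)

/-- Frobenius norm of the `(j,j)`-singular tube of `S`. -/
noncomputable def tubeNorm {n₁ n₂ : ℕ} (S : TI m → Matrix (Fin n₁) (Fin n₂) ℝ)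
    (j : Fin (min n₁ n₂)) : ℝ :=
  Real.sqrt (∑ i : TI m, tube S j i ^ 2)

/-- `r` is the t-rank: the number of nonzero singular tubes (tubes `s₁,…,s_r`
are nonzero and the remaining ones vanish). -/
def HasTRank {n₁ n₂ : ℕ} (S : TI m → Matrix (Fin n₁) (Fin n₂) ℝ) (r : ℕ) : Prop :=
  ∀ j : Fin (min n₁ n₂), ((j : ℕ) < r ↔ tube S j ≠ 0)

/-- Keep only the first `k` lateral slices (columns of each frontal slice). -/
def truncCols {n k : ℕ} (hk : k ≤ n) {a : Type}
    (U : TI m → Matrix a (Fin n) ℝ) : TI m → Matrix a (Fin k) ℝ :=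
  fun i => Matrix.of fun r c => U i r (Fin.castLE hk c)

/-- Keep only the leading `k × k` block of each frontal slice. -/
def truncBlock {n₁ n₂ k : ℕ} (h₁ : k ≤ n₁) (h₂ : k ≤ n₂)
    (S : TI m → Matrix (Fin n₁) (Fin n₂) ℝ) : TI m → Matrix (Fin k) (Fin k) ℝ :=
  fun i => Matrix.of fun a b => S i (Fin.castLE h₁ a) (Fin.castLE h₂ b)

/-- The t-rank-`k` truncation `A_k = U_k ⋆M S_k ⋆M V_kᵀ`. -/
noncomputable def truncApprox (M : ∀ k, Matrix (Fin (m k)) (Fin (m k)) ℝ)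
    {n₁ n₂ : ℕ} (U : TI m → Matrix (Fin n₁) (Fin n₁) ℝ)
    (S : TI m → Matrix (Fin n₁) (Fin n₂) ℝ)
    (V : TI m → Matrix (Fin n₂) (Fin n₂) ℝ) (k : ℕ) (hk : k ≤ min n₁ n₂) :
    TI m → Matrix (Fin n₁) (Fin n₂) ℝ :=
  starM M
    (starM M (truncCols (le_trans hk (Nat.min_le_left _ _)) U)
      (truncBlock (le_trans hk (Nat.min_le_left _ _)) (le_trans hk (Nat.min_le_right _ _)) S))
    (transM M (truncCols (le_trans hk (Nat.min_le_right _ _)) V))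

/-- The `j`-th lateral slice `A(:,j,:,…,:)`, as an `n₁ × 1 × n₃ × ⋯ × n_p` tensor. -/
def lateral {n₁ n₂ : ℕ} (A : TI m → Matrix (Fin n₁) (Fin n₂) ℝ) (j : Fin n₂) :
    TI m → Matrix (Fin n₁) (Fin 1) ℝ :=
  fun i => Matrix.of fun r _ => A i r j

/-- The `(j,j)`-singular tube of `S` regarded as a `1 × 1 × n₃ × ⋯ × n_p` tensor. -/
def tubeT {n₁ n₂ : ℕ} (S : TI m → Matrix (Fin n₁) (Fin n₂) ℝ)
    (j : Fin (min n₁ n₂)) : TI m → Matrix (Fin 1) (Fin 1) ℝ :=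
  fun i => Matrix.of fun _ _ => S i (dIdx₁ j) (dIdx₂ j)

/-!
The transform `A ↦ Â` multiplies every tube by the Kronecker product of the `M_k = c_k W_k`,
which is `∏ c_k` times an orthogonal matrix. It therefore scales the Frobenius norm by a fixed
factor and turns `⋆M`-products into facewise products. In the transform domain the truncation
`A_k` is, slice by slice, the classical truncated SVD `Û Ŝ_k V̂ᵀ`, while the slices of `B̂` have
rank at most `k`; so the claim reduces to the matrix Eckart–Young inequality on each frontal slice.

For a diagonal `S` with decreasing nonnegative diagonal `σ` and a competitor `C` of rank at most
`k`, let `P` be the orthogonal projection onto the column space of `C`. Then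
`‖S - C‖² ≥ ‖(1 - P) S‖² = ∑ σ_j² (1 - P_jj)`, and as the `P_jj` lie in `[0, 1]` with sum at most
`trace P ≤ k`, this is at least `∑_{j ≥ k} σ_j² = ‖S - S_k‖²`.
-/

section Frobenius

variable {a b : Type} [Fintype a] [Fintype b]

def frobSq (X : Matrix a b ℝ) : ℝ :=
  ∑ r, ∑ c, X r c ^ 2

lemma frobSq_nonneg (X : Matrix a b ℝ) : 0 ≤ frobSq X :=
  Finset.sum_nonneg fun _ _ => Finset.sum_nonneg fun _ _ => sq_nonneg _

lemma frobSq_transpose (X : Matrix a b ℝ) : frobSq Xᵀ = frobSq X :=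
  Finset.sum_comm

lemma frobSq_eq_trace (X : Matrix a b ℝ) : frobSq X = (Xᵀ * X).trace := by
  rw [← frobSq_transpose]
  simp only [frobSq, Matrix.trace, Matrix.diag, Matrix.mul_apply, Matrix.transpose_apply, sq]

lemma frobSq_add_of_transpose_mul_eq_zero {X Y : Matrix a b ℝ} (h : Xᵀ * Y = 0) :
    frobSq (X + Y) = frobSq X + frobSq Y := by
  have h' : Yᵀ * X = 0 := by simpa using congrArg transpose h
  simp only [frobSq_eq_trace, transpose_add, Matrix.add_mul, Matrix.mul_add, h, h', trace_add,
    trace_zero]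
  ring

lemma frobSq_orthogonal_mul [DecidableEq a] {Q : Matrix a a ℝ} (hQ : Qᵀ * Q = 1)
    (X : Matrix a b ℝ) : frobSq (Q * X) = frobSq X := by
  rw [frobSq_eq_trace, frobSq_eq_trace, transpose_mul, Matrix.mul_assoc, ← Matrix.mul_assoc Qᵀ,
    hQ, Matrix.one_mul]

lemma frobSq_mul_orthogonal_transpose [DecidableEq b] {V : Matrix b b ℝ} (hV : Vᵀ * V = 1)
    (X : Matrix a b ℝ) : frobSq (X * Vᵀ) = frobSq X := by
  rw [← frobSq_transpose, transpose_mul, transpose_transpose, frobSq_orthogonal_mul hV,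
    frobSq_transpose]

lemma frobSq_mul_add_frobSq_one_sub_mul [DecidableEq a] {P : Matrix a a ℝ} (hPt : Pᵀ = P)
    (hPP : P * P = P) (X : Matrix a b ℝ) : frobSq (P * X) + frobSq ((1 - P) * X) = frobSq X := by
  have horth : (P * X)ᵀ * ((1 - P) * X) = 0 := by
    rw [transpose_mul, hPt, Matrix.mul_assoc, ← Matrix.mul_assoc P, Matrix.mul_sub, hPP,
      Matrix.mul_one, sub_self, Matrix.zero_mul, Matrix.mul_zero]
  rw [← frobSq_add_of_transpose_mul_eq_zero horth, ← Matrix.add_mul, add_sub_cancel,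
    Matrix.one_mul]

lemma diag_eq_sum_sq_of_projection {P : Matrix a a ℝ} (hPt : Pᵀ = P) (hPP : P * P = P)
    (r : a) : P r r = ∑ t, P r t ^ 2 := by
  conv_lhs => rw [← hPP, Matrix.mul_apply]
  refine Finset.sum_congr rfl fun t _ => ?_
  rw [sq, ← hPt, transpose_apply, hPt]

lemma diag_mem_Icc_of_projection {P : Matrix a a ℝ} (hPt : Pᵀ = P) (hPP : P * P = P)
    (r : a) : P r r ∈ Set.Icc 0 1 := by
  have hsq : P r r ^ 2 ≤ P r r := by
    conv_rhs => rw [diag_eq_sum_sq_of_projection hPt hPP]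
    exact Finset.single_le_sum (f := fun t => P r t ^ 2) (fun t _ => sq_nonneg _)
      (Finset.mem_univ r)
  have h0 : 0 ≤ P r r := by
    rw [diag_eq_sum_sq_of_projection hPt hPP]
    exact Finset.sum_nonneg fun _ _ => sq_nonneg _
  exact ⟨h0, by nlinarith⟩

end Frobenius

lemma exists_projection_trace_eq_rank {a b : Type} [Fintype a] [DecidableEq a] [Fintype b]
    [DecidableEq b] (C : Matrix a b ℝ) :
    ∃ P : Matrix a a ℝ, Pᵀ = P ∧ P * P = P ∧ P.trace = C.rank ∧ P * C = C := by
  let ba := (EuclideanSpace.basisFun a ℝ).toBasis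
  let bb := (EuclideanSpace.basisFun b ℝ).toBasis
  let W := LinearMap.range (toLin bb ba C)
  let π : EuclideanSpace ℝ a →ₗ[ℝ] EuclideanSpace ℝ a := W.starProjection
  have hπ : LinearMap.IsProj W π :=
    ⟨W.starProjection_apply_mem, fun _ hx => Submodule.starProjection_eq_self_iff.2 hx⟩
  refine ⟨LinearMap.toMatrix ba ba π, ?_, ?_, ?_, ?_⟩
  · exact ((LinearMap.isHermitian_toMatrix_iff _).2 W.starProjection_isSymmetric).eq
  · rw [← LinearMap.toMatrix_mul]
    exact congrArg _ (congrArg ContinuousLinearMap.toLinearMap W.isIdempotentElem_starProjection.eq)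
  · rw [← LinearMap.trace_eq_matrix_trace, hπ.trace, rank_eq_finrank_range_toLin C ba bb]
  · conv_lhs => rw [← LinearMap.toMatrix_toLin bb ba C, ← LinearMap.toMatrix_comp]
    conv_rhs => rw [← LinearMap.toMatrix_toLin bb ba C]
    exact congrArg _ (LinearMap.ext fun x => hπ.2 _ (LinearMap.mem_range_self _ x))

section RectDiagonal

variable {n₁ n₂ : ℕ}

def IsRectDiag (S : Matrix (Fin n₁) (Fin n₂) ℝ) : Prop :=
  ∀ (a : Fin n₁) (b : Fin n₂), (a : ℕ) ≠ (b : ℕ) → S a b = 0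

def rectDiag (S : Matrix (Fin n₁) (Fin n₂) ℝ) (j : Fin (min n₁ n₂)) : ℝ :=
  S (dIdx₁ j) (dIdx₂ j)

lemma dIdx₁_injective : Function.Injective (dIdx₁ (n₁ := n₁) (n₂ := n₂)) :=
  fun _ _ h => Fin.ext (congrArg Fin.val h :)

lemma sum_sum_eq_sum_dIdx (f : Fin n₁ → Fin n₂ → ℝ)
    (hf : ∀ (a : Fin n₁) (b : Fin n₂), (a : ℕ) ≠ (b : ℕ) → f a b = 0) :
    ∑ a, ∑ b, f a b = ∑ j, f (dIdx₁ j) (dIdx₂ j) := by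
  rw [← Fintype.sum_prod_type']
  refine (Fintype.sum_of_injective (fun j => (dIdx₁ j, dIdx₂ j))
    (fun _ _ h => dIdx₁_injective (congrArg Prod.fst h)) _ _ ?_ fun _ => rfl).symm
  rintro ⟨a, b⟩ hab
  refine hf a b fun h => hab ⟨⟨a, lt_min a.2 (h ▸ b.2)⟩, ?_⟩
  exact Prod.ext rfl (Fin.ext h)

lemma frobSq_of_isRectDiag {S : Matrix (Fin n₁) (Fin n₂) ℝ} (hS : IsRectDiag S) :
    frobSq S = ∑ j, rectDiag S j ^ 2 :=
  sum_sum_eq_sum_dIdx _ fun a b hab => by rw [hS a b hab, sq, zero_mul]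

lemma frobSq_projection_mul_of_isRectDiag {S : Matrix (Fin n₁) (Fin n₂) ℝ} (hS : IsRectDiag S)
    {P : Matrix (Fin n₁) (Fin n₁) ℝ} (hPt : Pᵀ = P) (hPP : P * P = P) :
    frobSq (P * S) = ∑ j, rectDiag S j ^ 2 * P (dIdx₁ j) (dIdx₁ j) := by
  have hPS : ∀ j, (P * S) (dIdx₁ j) (dIdx₂ j) = P (dIdx₁ j) (dIdx₁ j) * rectDiag S j := by
    intro j
    rw [Matrix.mul_apply]
    refine Finset.sum_eq_single _ (fun t _ ht => ?_) (by simp)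
    rw [hS t _ fun h => ht (Fin.ext h), mul_zero]
  have htrace : ((P * S)ᵀ * (P * S)).trace = ∑ a, ∑ b, S a b * (P * S) a b := by
    rw [transpose_mul, hPt, Matrix.mul_assoc, ← Matrix.mul_assoc P, hPP, Matrix.trace,
      Finset.sum_comm]
    simp only [Matrix.diag, Matrix.mul_apply, Matrix.transpose_apply]
  rw [frobSq_eq_trace, htrace, sum_sum_eq_sum_dIdx _ fun a b hab => by rw [hS a b hab, zero_mul]]
  refine Finset.sum_congr rfl fun j _ => ?_
  rw [hPS, rectDiag]
  ring

end RectDiagonal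

lemma sum_mul_le_sum_filter_lt {n k : ℕ} {w t : Fin n → ℝ} (hw : Antitone w)
    (hw0 : ∀ j, 0 ≤ w j) (ht : ∀ j, t j ∈ Set.Icc 0 1) (hsum : ∑ j, t j ≤ k) :
    ∑ j, w j * t j ≤ ∑ j with j.val < k, w j := by
  rw [Finset.sum_filter]
  rcases lt_or_ge k n with hk | hk
  · -- compare with the threshold value `s = w k`
    set s := w ⟨k, hk⟩
    have hpt : ∀ j, w j * t j - (if j.val < k then w j else 0)
        ≤ s * t j - (if j.val < k then s else 0) := by
      intro j
      obtain ⟨ht0, ht1⟩ := ht j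
      split_ifs with hj
      · have : s ≤ w j := hw (Fin.mk_le_mk.2 hj.le)
        nlinarith
      · have : w j ≤ s := hw (Fin.mk_le_mk.2 (not_lt.1 hj))
        nlinarith
    have hcount : ∑ j : Fin n, (if j.val < k then s else 0) = k * s := by
      rw [← Finset.sum_filter, Finset.sum_const, Fin.card_filter_val_lt, min_eq_right hk.le,
        nsmul_eq_mul]
    have hs : 0 ≤ s := hw0 _
    have := Finset.sum_le_sum fun j (_ : j ∈ Finset.univ) => hpt j
    rw [Finset.sum_sub_distrib, Finset.sum_sub_distrib, ← Finset.mul_sum, hcount] at this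
    nlinarith
  · refine Finset.sum_le_sum fun j _ => ?_
    rw [if_pos (lt_of_lt_of_le j.2 hk)]
    exact mul_le_of_le_one_right (hw0 j) (ht j).2

section EckartYoung

variable {n₁ n₂ : ℕ}

lemma sum_filter_le_frobSq_sub_of_rank_le {k : ℕ} {S C : Matrix (Fin n₁) (Fin n₂) ℝ}
    (hS : IsRectDiag S) (hσ : Antitone (rectDiag S)) (hσ0 : ∀ j, 0 ≤ rectDiag S j)
    (hC : C.rank ≤ k) :
    ∑ j with k ≤ j.val, rectDiag S j ^ 2 ≤ frobSq (S - C) := by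
  obtain ⟨P, hPt, hPP, htr, hPC⟩ := exists_projection_trace_eq_rank C
  have hdiag := diag_mem_Icc_of_projection hPt hPP
  have hkill : (1 - P) * (S - C) = (1 - P) * S := by
    rw [Matrix.mul_sub, Matrix.sub_mul 1 P C, hPC, Matrix.one_mul, sub_self, sub_zero]
  have hfar : frobSq ((1 - P) * S) ≤ frobSq (S - C) := by
    rw [← hkill, ← frobSq_mul_add_frobSq_one_sub_mul hPt hPP (S - C)]
    linarith [frobSq_nonneg (P * (S - C))]
  have hmass : ∑ j : Fin (min n₁ n₂), P (dIdx₁ j) (dIdx₁ j) ≤ k := by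
    calc ∑ j, P (dIdx₁ j) (dIdx₁ j)
        = ∑ a ∈ Finset.univ.map ⟨dIdx₁, dIdx₁_injective⟩, P a a := by rw [Finset.sum_map]; rfl
      _ ≤ P.trace := Finset.sum_le_sum_of_subset_of_nonneg (Finset.subset_univ _)
          fun a _ _ => (hdiag a).1
      _ ≤ k := htr ▸ Nat.cast_le.2 hC
  have hweights := sum_mul_le_sum_filter_lt (w := fun j => rectDiag S j ^ 2)
    (fun i j hij => pow_le_pow_left₀ (hσ0 j) (hσ hij) 2) (fun j => sq_nonneg _)
    (fun j => hdiag _) hmass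
  have hsplit := frobSq_mul_add_frobSq_one_sub_mul hPt hPP S
  rw [frobSq_projection_mul_of_isRectDiag hS hPt hPP, frobSq_of_isRectDiag hS] at hsplit
  have htail := Finset.sum_filter_add_sum_filter_not Finset.univ
    (fun j : Fin (min n₁ n₂) => j.val < k) (fun j => rectDiag S j ^ 2)
  simp only [not_lt] at htail
  linarith

def leadingBlock (k : ℕ) (S : Matrix (Fin n₁) (Fin n₂) ℝ) : Matrix (Fin n₁) (Fin n₂) ℝ :=
  Matrix.of fun a b => if (a : ℕ) < k ∧ (b : ℕ) < k then S a b else 0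

lemma frobSq_sub_leadingBlock {k : ℕ} {S : Matrix (Fin n₁) (Fin n₂) ℝ} (hS : IsRectDiag S) :
    frobSq (S - leadingBlock k S) = ∑ j with k ≤ j.val, rectDiag S j ^ 2 := by
  have hoff : ∀ (a : Fin n₁) (b : Fin n₂), (a : ℕ) ≠ (b : ℕ) →
      (S - leadingBlock k S) a b ^ 2 = 0 := fun a b hab => by
    simp [leadingBlock, hS a b hab]
  rw [frobSq, sum_sum_eq_sum_dIdx _ hoff, Finset.sum_filter]
  refine Finset.sum_congr rfl fun j _ => ?_
  by_cases hj : k ≤ j.val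
  · simp [leadingBlock, rectDiag, dIdx₁, dIdx₂, not_lt.2 hj]
  · simp [leadingBlock, dIdx₁, dIdx₂, hj, not_le.1 hj]

theorem frobSq_sub_leadingBlock_le {k : ℕ} {U : Matrix (Fin n₁) (Fin n₁) ℝ}
    {S B : Matrix (Fin n₁) (Fin n₂) ℝ} {V : Matrix (Fin n₂) (Fin n₂) ℝ}
    (hU : Uᵀ * U = 1) (hV : Vᵀ * V = 1) (hS : IsRectDiag S) (hσ : Antitone (rectDiag S))
    (hσ0 : ∀ j, 0 ≤ rectDiag S j) (hB : B.rank ≤ k) :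
    frobSq (U * S * Vᵀ - U * leadingBlock k S * Vᵀ) ≤ frobSq (U * S * Vᵀ - B) := by
  set C := Uᵀ * B * V
  have hBC : B = U * C * Vᵀ := by
    simp only [C, ← Matrix.mul_assoc, mul_eq_one_comm.1 hU, Matrix.one_mul]
    rw [Matrix.mul_assoc, mul_eq_one_comm.1 hV, Matrix.mul_one]
  have hCrank : C.rank ≤ k :=
    ((rank_mul_le_left _ _).trans (rank_mul_le_right _ _)).trans hB
  rw [hBC, ← Matrix.sub_mul, ← Matrix.sub_mul, ← Matrix.mul_sub, ← Matrix.mul_sub,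
    frobSq_mul_orthogonal_transpose hV, frobSq_mul_orthogonal_transpose hV,
    frobSq_orthogonal_mul hU, frobSq_orthogonal_mul hU, frobSq_sub_leadingBlock hS]
  exact sum_filter_le_frobSq_sub_of_rank_le hS hσ hσ0 hCrank

lemma sum_castLE {n k : ℕ} (h : k ≤ n) (g : Fin n → ℝ) :
    ∑ a : Fin k, g (Fin.castLE h a) = ∑ a : Fin n with a.val < k, g a := by
  have himage :
      Finset.univ.map (Fin.castLEEmb h) = Finset.univ.filter (fun a : Fin n => a.val < k) := by
    ext a
    simp only [Finset.mem_map, Finset.mem_univ, true_and, Fin.coe_castLEEmb, Finset.mem_filter]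
    exact ⟨fun ⟨b, hb⟩ => hb ▸ b.2, fun ha => ⟨⟨a, ha⟩, rfl⟩⟩
  rw [← himage, Finset.sum_map]
  rfl

lemma submatrix_castLE_mul_mul_transpose {k : ℕ} (h₁ : k ≤ n₁) (h₂ : k ≤ n₂)
    (U : Matrix (Fin n₁) (Fin n₁) ℝ) (S : Matrix (Fin n₁) (Fin n₂) ℝ)
    (V : Matrix (Fin n₂) (Fin n₂) ℝ) :
    U.submatrix id (Fin.castLE h₁) * S.submatrix (Fin.castLE h₁) (Fin.castLE h₂) *
      (V.submatrix id (Fin.castLE h₂))ᵀ = U * leadingBlock k S * Vᵀ := by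
  ext r c
  have hrow : ∀ b : Fin n₂, ∑ a, U r a * leadingBlock k S a b = if b.val < k then
      ∑ a : Fin k, U r (Fin.castLE h₁ a) * S (Fin.castLE h₁ a) b else 0 := by
    intro b
    split_ifs with hb
    · simp only [sum_castLE h₁ fun a => U r a * S a b, Finset.sum_filter]
      simp [leadingBlock, hb]
    · simp [leadingBlock, hb]
  simp only [Matrix.mul_apply, Matrix.submatrix_apply, Matrix.transpose_apply, id, hrow,
    ite_mul, zero_mul, ← Finset.sum_filter]
  rw [← sum_castLE h₂]

end EckartYoung

section Transform

/-- The matrix `M_p ⊗ ⋯ ⊗ M₃` of the transform `A ↦ Â`, acting on the trailing multi-index. -/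
def piKronecker (M : ∀ k, Matrix (Fin (m k)) (Fin (m k)) ℝ) : Matrix (TI m) (TI m) ℝ :=
  Matrix.of fun i j => ∏ k, M k (i k) (j k)

lemma piKronecker_mul (M N : ∀ k, Matrix (Fin (m k)) (Fin (m k)) ℝ) :
    piKronecker (fun k => N k * M k) = piKronecker N * piKronecker M := by
  ext i l
  simp only [piKronecker, Matrix.of_apply, Matrix.mul_apply, Fintype.prod_sum,
    Finset.prod_mul_distrib]

lemma piKronecker_one : piKronecker (fun k => (1 : Matrix (Fin (m k)) (Fin (m k)) ℝ)) = 1 := by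
  ext i l
  simp only [piKronecker, Matrix.of_apply, Matrix.one_apply, Finset.prod_ite_zero,
    Finset.prod_const_one, Finset.mem_univ, forall_const, funext_iff]

lemma piKronecker_smul_one (d : Fin q → ℝ) :
    piKronecker (fun k => d k • (1 : Matrix (Fin (m k)) (Fin (m k)) ℝ)) = (∏ k, d k) • 1 := by
  rw [← piKronecker_one]
  ext i l
  simp only [piKronecker, Matrix.of_apply, Matrix.smul_apply, smul_eq_mul,
    Finset.prod_mul_distrib]

lemma hat_apply_apply (M : ∀ k, Matrix (Fin (m k)) (Fin (m k)) ℝ) {a b : Type}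
    (A : TI m → Matrix a b ℝ) (i : TI m) (r : a) (c : b) :
    hat M A i r c = (piKronecker M *ᵥ fun j => A j r c) i := by
  simp only [hat, Matrix.sum_apply, Matrix.smul_apply, smul_eq_mul, Matrix.mulVec,
    dotProduct, piKronecker, Matrix.of_apply]

lemma hat_hat (M N : ∀ k, Matrix (Fin (m k)) (Fin (m k)) ℝ) {a b : Type}
    (A : TI m → Matrix a b ℝ) : hat N (hat M A) = hat (fun k => N k * M k) A := by
  funext i
  ext r c
  simp only [hat_apply_apply, piKronecker_mul, ← Matrix.mulVec_mulVec]

lemma hat_one {a b : Type} (A : TI m → Matrix a b ℝ) :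
    hat (fun k => (1 : Matrix (Fin (m k)) (Fin (m k)) ℝ)) A = A := by
  funext i
  ext r c
  rw [hat_apply_apply, piKronecker_one, Matrix.one_mulVec]

variable {M : ∀ k, Matrix (Fin (m k)) (Fin (m k)) ℝ}

lemma hat_unhat (hM : ∀ k, IsUnit (M k)) {a b : Type} (A : TI m → Matrix a b ℝ) :
    hat M (unhat M A) = A := by
  have hinv : ∀ k, M k * (M k)⁻¹ = 1 := fun k =>
    Matrix.mul_nonsing_inv _ ((Matrix.isUnit_iff_isUnit_det _).1 (hM k))
  change hat M (hat (fun k => (M k)⁻¹) A) = A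
  simp only [hat_hat, hinv, hat_one]

lemma hat_starM (hM : ∀ k, IsUnit (M k)) {a b c : Type} [Fintype b] (A : TI m → Matrix a b ℝ)
    (B : TI m → Matrix b c ℝ) (i : TI m) : hat M (starM M A B) i = hat M A i * hat M B i :=
  congrFun (hat_unhat hM _) i

lemma hat_transM (hM : ∀ k, IsUnit (M k)) {a b : Type} (A : TI m → Matrix a b ℝ) (i : TI m) :
    hat M (transM M A) i = (hat M A i)ᵀ :=
  congrFun (hat_unhat hM _) i

lemma hat_idM (hM : ∀ k, IsUnit (M k)) (a : Type) [DecidableEq a] (i : TI m) :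
    hat M (idM M a) i = 1 :=
  congrFun (hat_unhat hM _) i

lemma hat_sub {a b : Type} (A B : TI m → Matrix a b ℝ) (i : TI m) :
    hat M (A - B) i = hat M A i - hat M B i := by
  ext r c
  simp only [hat_apply_apply, Matrix.sub_apply, Pi.sub_apply]
  rw [← Pi.sub_def, Matrix.mulVec_sub, Pi.sub_apply]

lemma hat_submatrix {a b a' b' : Type} (A : TI m → Matrix a b ℝ) (e : a' → a) (f : b' → b)
    (i : TI m) : hat M (fun j => (A j).submatrix e f) i = (hat M A i).submatrix e f := by
  ext r c
  simp only [hat_apply_apply, Matrix.submatrix_apply]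

lemma hat_truncCols {n k : ℕ} (hk : k ≤ n) {a : Type} (U : TI m → Matrix a (Fin n) ℝ)
    (i : TI m) : hat M (truncCols hk U) i = (hat M U i).submatrix id (Fin.castLE hk) :=
  hat_submatrix U id (Fin.castLE hk) i

lemma hat_truncBlock {n₁ n₂ k : ℕ} (h₁ : k ≤ n₁) (h₂ : k ≤ n₂)
    (S : TI m → Matrix (Fin n₁) (Fin n₂) ℝ) (i : TI m) :
    hat M (truncBlock h₁ h₂ S) i = (hat M S i).submatrix (Fin.castLE h₁) (Fin.castLE h₂) :=
  hat_submatrix S (Fin.castLE h₁) (Fin.castLE h₂) i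

lemma IsStarMOrthogonal.transpose_mul_hat (hM : ∀ k, IsUnit (M k)) {a : Type} [Fintype a]
    [DecidableEq a] {Q : TI m → Matrix a a ℝ} (hQ : IsStarMOrthogonal M Q) (i : TI m) :
    (hat M Q i)ᵀ * hat M Q i = 1 := by
  rw [← hat_transM hM, ← hat_starM hM, hQ.1, hat_idM hM]

variable {n₁ n₂ : ℕ} {A : TI m → Matrix (Fin n₁) (Fin n₂) ℝ}
  {U : TI m → Matrix (Fin n₁) (Fin n₁) ℝ} {S : TI m → Matrix (Fin n₁) (Fin n₂) ℝ}
  {V : TI m → Matrix (Fin n₂) (Fin n₂) ℝ}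

lemma IsTSVDM.hat_eq (hM : ∀ k, IsUnit (M k)) (h : IsTSVDM M A U S V) (i : TI m) :
    hat M A i = hat M U i * hat M S i * (hat M V i)ᵀ := by
  rw [h.decomp, hat_starM hM, hat_starM hM, hat_transM hM]

lemma hat_truncApprox (hM : ∀ k, IsUnit (M k)) {k : ℕ} (hk : k ≤ min n₁ n₂) (i : TI m) :
    hat M (truncApprox M U S V k hk) i
      = hat M U i * leadingBlock k (hat M S i) * (hat M V i)ᵀ := by
  rw [truncApprox, hat_starM hM, hat_starM hM, hat_transM hM, hat_truncCols, hat_truncCols,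
    hat_truncBlock]
  exact submatrix_castLE_mul_mul_transpose _ _ (hat M U i) (hat M S i) (hat M V i)

lemma sum_frobSq_hat {d : Fin q → ℝ} (hM : ∀ k, (M k)ᵀ * M k = d k • 1) {a b : Type}
    [Fintype a] [Fintype b] (X : TI m → Matrix a b ℝ) :
    ∑ i, frobSq (hat M X i) = (∏ k, d k) * ∑ i, frobSq (X i) := by
  have hK : (piKronecker M)ᵀ * piKronecker M = (∏ k, d k) • 1 := by
    rw [← piKronecker_smul_one, ← funext hM]
    exact (piKronecker_mul M (fun k => (M k)ᵀ)).symm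
  have htube : ∀ v : TI m → ℝ, ∑ i, (piKronecker M *ᵥ v) i ^ 2 = (∏ k, d k) * ∑ i, v i ^ 2 := by
    intro v
    simp only [sq]
    change (piKronecker M *ᵥ v) ⬝ᵥ (piKronecker M *ᵥ v) = _ * (v ⬝ᵥ v)
    rw [dotProduct_mulVec, ← mulVec_transpose, mulVec_mulVec, hK, smul_mulVec,
      one_mulVec, smul_dotProduct, dotProduct_comm, smul_eq_mul]
  have hswap : ∀ Y : TI m → Matrix a b ℝ, ∑ i, frobSq (Y i) = ∑ r, ∑ c, ∑ i, Y i r c ^ 2 :=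
    fun Y => by
      simp only [frobSq]
      rw [Finset.sum_comm]
      exact Finset.sum_congr rfl fun _ _ => Finset.sum_comm
  simp only [hswap, hat_apply_apply, htube, Finset.mul_sum]

lemma frob_le_frob_of_hat {d : Fin q → ℝ} (hM : ∀ k, (M k)ᵀ * M k = d k • 1)
    (hd : ∀ k, 0 < d k) {a b : Type} [Fintype a] [Fintype b] {X Y : TI m → Matrix a b ℝ}
    (h : ∀ i, frobSq (hat M X i) ≤ frobSq (hat M Y i)) : frob X ≤ frob Y := by
  change √(∑ i, frobSq (X i)) ≤ √(∑ i, frobSq (Y i))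
  refine Real.sqrt_le_sqrt (le_of_mul_le_mul_left ?_
    (Finset.prod_pos fun k (_ : k ∈ Finset.univ) => hd k))
  rw [← sum_frobSq_hat hM, ← sum_frobSq_hat hM]
  exact Finset.sum_le_sum fun i _ => h i

end Transform

/-- (Eckart–Young for the higher-order `⋆M`-product: optimality.)
For every tensor `B` of t-rank at most `k` (every frontal slice of `B̂` has
matrix rank at most `k`), `‖A − A_k‖_F ≤ ‖A − B‖_F`. -/
theorem truncApprox_optimal {q : ℕ} {m : Fin q → ℕ}
    (M : ∀ k, Matrix (Fin (m k)) (Fin (m k)) ℝ)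
    (c : Fin q → ℝ) (W : ∀ k, Matrix (Fin (m k)) (Fin (m k)) ℝ)
    (hc : ∀ k, c k ≠ 0)
    (hW : ∀ k, W k * (W k)ᵀ = 1 ∧ (W k)ᵀ * W k = 1)
    (hM : ∀ k, M k = c k • W k)
    {n₁ n₂ : ℕ} (A : TI m → Matrix (Fin n₁) (Fin n₂) ℝ)
    (U : TI m → Matrix (Fin n₁) (Fin n₁) ℝ)
    (S : TI m → Matrix (Fin n₁) (Fin n₂) ℝ)
    (V : TI m → Matrix (Fin n₂) (Fin n₂) ℝ)
    (hSVD : IsTSVDM M A U S V) (k : ℕ) (hk : k ≤ min n₁ n₂) :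
    ∀ B : TI m → Matrix (Fin n₁) (Fin n₂) ℝ, (∀ i : TI m, (hat M B i).rank ≤ k) →
      frob (A - truncApprox M U S V k hk) ≤ frob (A - B) := by
  intro B hB
  have hunit : ∀ k, IsUnit (M k) := fun k => IsUnit.of_mul_eq_one ((c k)⁻¹ • (W k)ᵀ) <| by
    rw [hM k, smul_mul_smul_comm, (hW k).1, mul_inv_cancel₀ (hc k), one_smul]
  have hMtM : ∀ k, (M k)ᵀ * M k = c k ^ 2 • 1 := fun k => by
    rw [hM k, transpose_smul, smul_mul_smul_comm, (hW k).2, sq]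
  refine frob_le_frob_of_hat hMtM (fun k => sq_pos_of_ne_zero (hc k)) fun i => ?_
  rw [hat_sub, hat_sub, hSVD.hat_eq hunit, hat_truncApprox hunit]
  exact frobSq_sub_leadingBlock_le (hSVD.orthU.transpose_mul_hat hunit i)
    (hSVD.orthV.transpose_mul_hat hunit i) (hSVD.fdiag i) (hSVD.descend i)
    (hSVD.nonneg i) (hB i)

end TSVDM
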